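/- arXiv:2007.00611 — 6 statements merged into one kernel-verified Lean document; each statement's English description precedes it below -/
import Mathlib

section
/- Let G be the 2n×2n block matrix G = [[−ηC_β, −ηA], [Aᵀ − C, −A]] where C_β = C + βI, η, β > 0, and C is positive semidefinite (so C_β + λI is invertible whenever needed). Then for any λ ∈ ℂ, det(G − λI) = det( λ(ηC + (ηβ + λ)I) + A(ηAᵀ + (ηβ + λ)I) ). -/
/-!
In `G - λI` the two right-hand blocks `-ηA` and `-(A + λI)` commute, and for a block matrix
`[[P, Q], [R, S]]` with `QS = SQ` one has `det = det (SP - QR)`, here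
`det ((A + λI)(ηC_β + λI) + ηA(Aᵀ - C))`, which expands to the claimed matrix.
The block formula comes from `[[S, -Q], [0, I]] * [[P, Q], [R, S]] = [[SP - QR, 0], [R, S]]`
once `det S` is cancelled; this is legitimate after replacing `S` by `S + X•I` over `R[X]`,
whose determinant is monic, and then setting `X = 0`.
-/

open Polynomial

namespace Matrix

variable {n R : Type*} [Fintype n] [DecidableEq n] [CommRing R]

theorem det_mul_det_fromBlocks_of_commute (A B C D : Matrix n n R) (hBD : Commute B D) :
    D.det * (fromBlocks A B C D).det = D.det * (D * A - B * C).det := by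
  have h : fromBlocks D (-B) 0 1 * fromBlocks A B C D = fromBlocks (D * A - B * C) 0 C D := by
    simp [fromBlocks_multiply, hBD.eq, sub_eq_add_neg]
  calc D.det * (fromBlocks A B C D).det
      = (fromBlocks D (-B) 0 1 * fromBlocks A B C D).det := by
        rw [det_mul, det_fromBlocks_zero₂₁, det_one, mul_one]
    _ = D.det * (D * A - B * C).det := by rw [h, det_fromBlocks_zero₁₂, mul_comm]

theorem det_fromBlocks_of_commute (A B C D : Matrix n n R) (hBD : Commute B D) :
    (fromBlocks A B C D).det = (D * A - B * C).det := by
  let φ : R →+* R[X] := Polynomial.C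
  let ε : R[X] →+* R := Polynomial.evalRingHom 0
  have hε : ∀ M : Matrix n n R, (M.map φ).map ε = M := fun M => by ext; simp [φ, ε]
  have hεD : (charmatrix (-D)).map ε = D := by
    ext; simp [ε, charmatrix_apply, diagonal_apply, apply_ite]
  have hBD' : Commute (B.map φ) (charmatrix (-D)) := by
    rw [charmatrix]
    exact (scalar_commute _ (Commute.all _) _).symm.sub_right (hBD.neg_right.map φ.mapMatrix)
  have key := (charpoly_monic (-D)).isRegular.left <|
    det_mul_det_fromBlocks_of_commute (A.map φ) (B.map φ) (C.map φ) _ hBD'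
  simpa [RingHom.map_det, fromBlocks_map, Matrix.map_sub, Matrix.map_mul, hε, hεD] using
    congrArg ε key

end Matrix

open Matrix Complex

theorem tdrc_det_identity_general {n : ℕ} (A C : Matrix (Fin n) (Fin n) ℝ)
    (η β : ℝ) (lam : ℂ) :
    ((Matrix.fromBlocks
        (-(η • (C + β • (1 : Matrix (Fin n) (Fin n) ℝ)))) (-(η • A))
        (Aᵀ - C) (-A)).map (Complex.ofReal) - lam • 1).det =
      (lam • ((η : ℂ) • (C.map Complex.ofReal) + ((η : ℂ) * (β : ℂ) + lam) • 1) +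
        (A.map Complex.ofReal) *
          ((η : ℂ) • (A.map Complex.ofReal)ᵀ + ((η : ℂ) * (β : ℂ) + lam) • 1)).det := by
  set Ac := A.map Complex.ofReal
  set Cc := C.map Complex.ofReal
  have hblocks : (Matrix.fromBlocks
        (-(η • (C + β • (1 : Matrix (Fin n) (Fin n) ℝ)))) (-(η • A))
        (Aᵀ - C) (-A)).map (Complex.ofReal) - lam • 1
      = fromBlocks (-((η : ℂ) • Cc + ((η : ℂ) * β + lam) • 1)) (-((η : ℂ) • Ac))
          (Acᵀ - Cc) (-(Ac + lam • 1)) := by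
    ext (i | i) (j | j) <;> simp [Ac, Cc, one_apply] <;> split_ifs <;> push_cast <;> ring
  have hcomm : Commute (-((η : ℂ) • Ac)) (-(Ac + lam • 1)) :=
    ((Commute.refl Ac).add_right ((Commute.one_right Ac).smul_right lam)
      |>.smul_left _).neg_left.neg_right
  rw [hblocks, det_fromBlocks_of_commute _ _ _ _ hcomm]
  congr 1
  simp only [Matrix.neg_mul, Matrix.mul_neg, Matrix.add_mul, Matrix.mul_add, Matrix.mul_sub,
    Matrix.mul_smul, Matrix.smul_mul, Matrix.mul_one, Matrix.one_mul]
  module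

/-- Determinant identity for the TDRC expected update matrix
`G = [[−ηC_β, −ηA], [Aᵀ − C, −A]]`: for any `λ ∈ ℂ`,
`det(G − λI) = det(λ(ηC + (ηβ + λ)I) + A(ηAᵀ + (ηβ + λ)I))`. -/
theorem tdrc_det_identity {n : ℕ} (A C : Matrix (Fin n) (Fin n) ℝ)
    (hC : C.PosSemidef) (η β : ℝ) (hη : 0 < η) (hβ : 0 < β) (lam : ℂ) :
    ((Matrix.fromBlocks
        (-(η • (C + β • (1 : Matrix (Fin n) (Fin n) ℝ)))) (-(η • A))
        (Aᵀ - C) (-A)).map (Complex.ofReal) - lam • 1).det =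
      (lam • ((η : ℂ) • (C.map Complex.ofReal) + ((η : ℂ) * (β : ℂ) + lam) • 1) +
        (A.map Complex.ofReal) *
          ((η : ℂ) • (A.map Complex.ofReal)ᵀ + ((η : ℂ) * (β : ℂ) + lam) • 1)).det :=
  tdrc_det_identity_general A C η β lam
end

section
/- Let G = [[−ηC_β, −ηA], [Aᵀ − C, −A]] as above with A + βI and C_β invertible. Then det(G) = η^n · det(Aᵀ + βI) · det(A). In particular, if A is invertible and −β is not an eigenvalue of A, then G is invertible. -/
open Matrix

/-- For `G = [[−ηC_β, −ηA], [Aᵀ − C, −A]]` with `A + βI` and `C_β = C + βI`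
invertible, `det(G) = ηⁿ · det(Aᵀ + βI) · det(A)`; in particular if `A` is invertible then
`G` is invertible. -/
theorem tdrc_det_G {n : ℕ} (A C : Matrix (Fin n) (Fin n) ℝ) (η β : ℝ)
    (hη : 0 < η) (hβ : 0 < β)
    (hA : IsUnit (A + β • (1 : Matrix (Fin n) (Fin n) ℝ)).det)
    (hCβ : IsUnit (C + β • (1 : Matrix (Fin n) (Fin n) ℝ)).det) :
    (Matrix.fromBlocks
        (-(η • (C + β • (1 : Matrix (Fin n) (Fin n) ℝ)))) (-(η • A))
        (Aᵀ - C) (-A)).det =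
      η ^ n * (Aᵀ + β • (1 : Matrix (Fin n) (Fin n) ℝ)).det * A.det ∧
    (IsUnit A.det →
      IsUnit (Matrix.fromBlocks
        (-(η • (C + β • (1 : Matrix (Fin n) (Fin n) ℝ)))) (-(η • A))
        (Aᵀ - C) (-A)).det) := by
  set Cβ : Matrix (Fin n) (Fin n) ℝ := C + β • 1 with hCβdef
  haveI : Invertible Cβ := Cβ.invertibleOfIsUnitDet hCβ
  have hMeq : (fromBlocks (-(η • Cβ)) (-(η • A)) (Aᵀ - C) (-A)) =
      (fromBlocks (-(η • Cβ)) 0 (Aᵀ - C) 1) *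
      (fromBlocks 1 (⅟Cβ * A) 0 (-((Aᵀ + β • 1) * ⅟Cβ * A))) := by
    rw [fromBlocks_multiply]
    have e11 : -(η • Cβ) * 1 + 0 * 0 = -(η • Cβ) := by simp
    have e12 : -(η • Cβ) * (⅟Cβ * A) + 0 * (-((Aᵀ + β • 1) * ⅟Cβ * A)) = -(η • A) := by
      simp only [Matrix.zero_mul, add_zero, Matrix.smul_mul, Matrix.neg_mul,
        ← Matrix.mul_assoc, mul_invOf_self, Matrix.one_mul]
    have e21 : (Aᵀ - C) * 1 + 1 * 0 = Aᵀ - C := by simp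
    have e22 : (Aᵀ - C) * (⅟Cβ * A) + 1 * (-((Aᵀ + β • 1) * ⅟Cβ * A)) = -A := by
      rw [Matrix.one_mul, ← Matrix.mul_assoc, ← Matrix.neg_mul, ← Matrix.neg_mul,
        ← Matrix.add_mul, ← Matrix.add_mul]
      have h0 : (Aᵀ - C) + -(Aᵀ + β • (1 : Matrix (Fin n) (Fin n) ℝ)) = -Cβ := by
        rw [hCβdef]; abel
      rw [h0, Matrix.neg_mul, mul_invOf_self, Matrix.neg_mul, Matrix.one_mul]
    rw [e11, e12, e21, e22]
  have hdet : (fromBlocks (-(η • Cβ)) (-(η • A)) (Aᵀ - C) (-A)).det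
      = η ^ n * (Aᵀ + β • (1 : Matrix (Fin n) (Fin n) ℝ)).det * A.det := by
    rw [hMeq, det_mul, det_fromBlocks_zero₁₂, det_fromBlocks_zero₂₁, det_one,
      mul_one, one_mul]
    have h1 : (-(η • Cβ)).det = (-η) ^ n * Cβ.det := by
      rw [← neg_smul, det_smul, Fintype.card_fin]
    have h2 : (-((Aᵀ + β • 1) * ⅟Cβ * A)).det
        = (-1 : ℝ) ^ n * ((Aᵀ + β • (1 : Matrix (Fin n) (Fin n) ℝ)).det * (Cβ.det)⁻¹ * A.det) := by
      rw [det_neg, Fintype.card_fin, det_mul, det_mul, invOf_eq_nonsing_inv, det_nonsing_inv,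
        Ring.inverse_eq_inv']
    rw [h1, h2]
    have hc : Cβ.det ≠ 0 := hCβ.ne_zero
    have hpow : (-η) ^ n * (-1 : ℝ) ^ n = η ^ n := by
      rw [← mul_pow]; ring_nf
    field_simp
    ring_nf
    simp [pow_mul, neg_one_sq, ← pow_mul, mul_comm n 2]
  refine ⟨hdet, fun hAdet => ?_⟩
  rw [hdet]
  have hAT : IsUnit (Aᵀ + β • (1 : Matrix (Fin n) (Fin n) ℝ)).det := by
    have : (Aᵀ + β • (1 : Matrix (Fin n) (Fin n) ℝ)) = (A + β • 1)ᵀ := by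
      simp [transpose_add, transpose_smul]
    rw [this, det_transpose]; exact hA
  exact ((isUnit_iff_ne_zero.2 (pow_ne_zero n hη.ne')).mul hAT).mul hAdet
end

section
/- Let λ₁, λ₂ ∈ ℂ be the two roots of λ² + (ηβ + ηb_c + λ_z)λ + η(βλ_z + b_a) = 0 with b_c, b_a ≥ 0 real, λ_z = λ_r + iλ_c, and η, β > 0. If Ω := ηβ + ηb_c + λ_r > 0, βλ_r + b_a > 0, and ηb_c + λ_r > 0, then Re(λ₁) < 0 and Re(λ₂) < 0. -/
open Complex

/-- Any root `λ` of `λ² + (ηβ + ηb_c + λ_z)λ + η(βλ_z + b_a) = 0` with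
`b_c, b_a ≥ 0`, `λ_z = λ_r + iλ_c`, `η, β > 0`, `Ω = ηβ + ηb_c + λ_r > 0`,
`βλ_r + b_a > 0` and `ηb_c + λ_r > 0`, has negative real part. -/
theorem tdrc_roots_negative_real_part (η β b_c b_a lr lc : ℝ)
    (hη : 0 < η) (hβ : 0 < β) (hbc : 0 ≤ b_c) (hba : 0 ≤ b_a)
    (hΩ : 0 < η * β + η * b_c + lr)
    (h2 : 0 < β * lr + b_a)
    (h3 : 0 < η * b_c + lr)
    (lam : ℂ)
    (hroot : lam ^ 2 +
        ((η : ℂ) * (β : ℂ) + (η : ℂ) * (b_c : ℂ) + ((lr : ℂ) + (lc : ℂ) * Complex.I)) * lam +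
        (η : ℂ) * ((β : ℂ) * ((lr : ℂ) + (lc : ℂ) * Complex.I) + (b_a : ℂ)) = 0) :
    lam.re < 0 := by
  by_contra hx
  push_neg at hx
  set x := lam.re with hxdef
  set y := lam.im with hydef
  rw [Complex.ext_iff] at hroot
  obtain ⟨hre, him⟩ := hroot
  simp only [pow_two, Complex.mul_re, Complex.mul_im, Complex.add_re, Complex.add_im,
    Complex.ofReal_re, Complex.ofReal_im, Complex.I_re, Complex.I_im, Complex.zero_re,
    Complex.zero_im] at hre him
  ring_nf at hre him
  have E1 : x^2 - y^2 + (η*β + η*b_c + lr)*x - lc*y + η*(β*lr + b_a) = 0 := by linarith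
  have E2 : (2*x + (η*β + η*b_c + lr))*y + lc*(x + η*β) = 0 := by linarith
  have key : (x^2 + (η*β + η*b_c + lr)*x + η*(β*lr + b_a)) * (2*x + (η*β + η*b_c + lr))^2
      + lc^2 * (x + η*β) * (x + η*b_c + lr) = 0 := by
    linear_combination (2*x + (η*β + η*b_c + lr))^2 * E1
      + (y*(2*x + (η*β + η*b_c + lr)) + lc*(x + η*b_c + lr)) * E2
  have A : 0 < x^2 + (η*β + η*b_c + lr)*x + η*(β*lr + b_a) := by
    have := mul_pos hη h2
    nlinarith [sq_nonneg x, mul_nonneg (le_of_lt hΩ) hx]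
  have B : 0 < (2*x + (η*β + η*b_c + lr))^2 := by positivity
  have C : 0 ≤ lc^2 * (x + η*β) * (x + η*b_c + lr) := by
    have h4 : 0 < x + η*β := by nlinarith
    have h5 : 0 < x + η*b_c + lr := by linarith
    positivity
  nlinarith [mul_pos A B]
end

section
/- Let A, C ∈ ℝ^{n×n} with C positive semidefinite and β > 0, C_β = C + βI. Let λ be an eigenvalue of the matrix Ḡ = [[−ηC_β, −ηA], [Aᵀ − C_β, −A]]. Then there exists a nonzero z ∈ ℂ^n with ‖z‖² λ² + (z*(ηC_β + A)z)λ + η‖Aᵀz‖² = 0 (up to replacing Aᵀz with Az as appropriate). -/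
open Matrix Complex

/-- If `λ` is an eigenvalue of the TDC++ matrix
`Ḡ = [[−ηC_β, −ηA], [Aᵀ − C_β, −A]]` with `C` PSD and `β > 0`, then there is a nonzero
`z ∈ ℂⁿ` with `‖z‖² λ² + (z*(ηC_β + A)z) λ + η‖Aᵀz‖² = 0`. -/
theorem tdcpp_eigenvalue_quadratic {n : ℕ} (A C : Matrix (Fin n) (Fin n) ℝ)
    (hC : C.PosSemidef) (η β : ℝ) (hη : 0 < η) (hβ : 0 < β) (lam : ℂ)
    (hlam : lam ∈ spectrum ℂ ((Matrix.fromBlocks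
        (-(η • (C + β • (1 : Matrix (Fin n) (Fin n) ℝ)))) (-(η • A))
        (Aᵀ - (C + β • (1 : Matrix (Fin n) (Fin n) ℝ))) (-A)).map Complex.ofReal)) :
    ∃ z : Fin n → ℂ, z ≠ 0 ∧
      (star z ⬝ᵥ z) * lam ^ 2 +
        (star z ⬝ᵥ (((η • (C + β • (1 : Matrix (Fin n) (Fin n) ℝ)) + A).map
            Complex.ofReal).mulVec z)) * lam +
        (η : ℂ) * (star ((Aᵀ.map Complex.ofReal).mulVec z) ⬝ᵥ
          ((Aᵀ.map Complex.ofReal).mulVec z)) = 0 := by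
  classical
  set A' : Matrix (Fin n) (Fin n) ℂ := A.map Complex.ofReal with hA'
  set Cb' : Matrix (Fin n) (Fin n) ℂ :=
    (C + β • (1 : Matrix (Fin n) (Fin n) ℝ)).map Complex.ofReal with hCb'
  have hblocks : ((Matrix.fromBlocks
        (-(η • (C + β • (1 : Matrix (Fin n) (Fin n) ℝ)))) (-(η • A))
        (Aᵀ - (C + β • (1 : Matrix (Fin n) (Fin n) ℝ))) (-A)).map Complex.ofReal)
      = Matrix.fromBlocks (-(((η:ℂ)) • Cb')) (-(((η:ℂ)) • A'))
          (A'ᵀ - Cb') (-A') := by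
    ext i j
    rcases i with i | i <;> rcases j with j | j <;>
      simp only [Matrix.map_apply, Matrix.fromBlocks_apply₁₁, Matrix.fromBlocks_apply₁₂,
        Matrix.fromBlocks_apply₂₁, Matrix.fromBlocks_apply₂₂, Matrix.neg_apply,
        Matrix.smul_apply, Matrix.sub_apply, Matrix.transpose_apply, smul_eq_mul,
        Complex.ofReal_neg, Complex.ofReal_mul, Complex.ofReal_sub, A', Cb']
  rw [hblocks] at hlam
  rw [spectrum.mem_iff] at hlam
  have hdet : (algebraMap ℂ (Matrix (Fin n ⊕ Fin n) (Fin n ⊕ Fin n) ℂ) lam -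
      Matrix.fromBlocks (-(((η:ℂ)) • Cb')) (-(((η:ℂ)) • A')) (A'ᵀ - Cb') (-A')).det = 0 := by
    by_contra h
    exact hlam ((Matrix.isUnit_iff_isUnit_det _).mpr (isUnit_iff_ne_zero.mpr h))
  obtain ⟨v, hv0, hv⟩ := (Matrix.exists_mulVec_eq_zero_iff).mpr hdet
  set x : Fin n → ℂ := v ∘ Sum.inl with hx
  set y : Fin n → ℂ := v ∘ Sum.inr with hy
  have hGv : (Matrix.fromBlocks (-(((η:ℂ)) • Cb')) (-(((η:ℂ)) • A'))
      (A'ᵀ - Cb') (-A')) *ᵥ v = lam • v := by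
    have := hv
    rw [Matrix.sub_mulVec] at this
    have h1 : (algebraMap ℂ (Matrix (Fin n ⊕ Fin n) (Fin n ⊕ Fin n) ℂ) lam) *ᵥ v = lam • v := by
      ext i; simp [Matrix.mulVec, dotProduct, Matrix.algebraMap_matrix_apply,
        Finset.sum_ite_eq, mul_comm]
    rw [h1, sub_eq_zero] at this
    exact this.symm
  rw [Matrix.fromBlocks_mulVec] at hGv
  have key1 : lam • x = -((η:ℂ) • (Cb' *ᵥ x) + (η:ℂ) • (A' *ᵥ y)) := by
    funext i
    have := congrFun hGv (Sum.inl i)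
    simp only [Sum.elim_inl, Pi.add_apply, Matrix.neg_mulVec, Pi.neg_apply,
      Matrix.smul_mulVec, Pi.smul_apply, smul_eq_mul] at this ⊢
    have hxi : v (Sum.inl i) = x i := rfl
    rw [hxi] at this
    linear_combination this.symm
  have key2 : A'ᵀ *ᵥ x = lam • y + A' *ᵥ y + Cb' *ᵥ x := by
    funext i
    have := congrFun hGv (Sum.inr i)
    simp only [Sum.elim_inr, Pi.add_apply, Matrix.sub_mulVec, Matrix.neg_mulVec,
      Pi.sub_apply, Pi.neg_apply, Pi.smul_apply, smul_eq_mul] at this ⊢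
    have hyi : v (Sum.inr i) = y i := rfl
    rw [hyi] at this
    linear_combination this
  by_cases hxne : x = 0
  · -- then A' *ᵥ y = 0, lam • y = 0, y ≠ 0, lam = 0
    have hyne : y ≠ 0 := by
      intro h
      apply hv0
      funext i
      rcases i with i | i
      · exact congrFun hxne i
      · exact congrFun h i
    have hAy : A' *ᵥ y = 0 := by
      have := key1
      rw [hxne] at this
      simp only [smul_zero, Matrix.mulVec_zero, smul_zero, zero_add] at this
      have h2 : (η:ℂ) • (A' *ᵥ y) = 0 := by
        simpa using this.symm
      have hne : (η:ℂ) ≠ 0 := by exact_mod_cast hη.ne'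
      simpa [hne] using smul_eq_zero.mp h2
    have hlam0 : lam = 0 := by
      have := key2
      rw [hxne, hAy] at this
      simp only [Matrix.mulVec_zero, add_zero, zero_add] at this
      have : lam • y = 0 := by simpa using this.symm
      rcases smul_eq_zero.mp this with h | h
      · exact h
      · exact absurd h hyne
    -- A' singular, so A'ᵀ singular: get z with A'ᵀ *ᵥ z = 0
    have hdetA : A'.det = 0 := by
      rw [← Matrix.exists_mulVec_eq_zero_iff]
      exact ⟨y, hyne, hAy⟩
    have hdetAt : (A'ᵀ).det = 0 := by rw [Matrix.det_transpose]; exact hdetA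
    obtain ⟨z, hz0, hz⟩ := (Matrix.exists_mulVec_eq_zero_iff).mpr hdetAt
    refine ⟨z, hz0, ?_⟩
    have hmap : (Aᵀ.map Complex.ofReal) = A'ᵀ := by
      ext i j; simp [A']
    rw [hmap, hz, hlam0]
    simp
  · -- main case: z = x
    refine ⟨x, hxne, ?_⟩
    have hmapt : (Aᵀ.map Complex.ofReal) = A'ᵀ := by ext i j; simp [A']
    have hmapB : ((η • (C + β • (1 : Matrix (Fin n) (Fin n) ℝ)) + A).map Complex.ofReal)
        = (η:ℂ) • Cb' + A' := by
      ext i j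
      simp [A', Cb', Matrix.one_apply, apply_ite, mul_add]
    -- vector identity
    have hvec : lam ^ 2 • x + lam • (((η:ℂ) • Cb' + A') *ᵥ x)
        + (η:ℂ) • (A' *ᵥ (A'ᵀ *ᵥ x)) = 0 := by
      have e1 : lam ^ 2 • x = -((η:ℂ) • (lam • (Cb' *ᵥ x)) + (η:ℂ) • (lam • (A' *ᵥ y))) := by
        calc lam ^ 2 • x = lam • (lam • x) := by rw [smul_smul, ← pow_two]
        _ = lam • (-((η:ℂ) • (Cb' *ᵥ x) + (η:ℂ) • (A' *ᵥ y))) := by rw [key1]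
        _ = -((η:ℂ) • (lam • (Cb' *ᵥ x)) + (η:ℂ) • (lam • (A' *ᵥ y))) := by
            rw [smul_neg, smul_add, smul_comm lam, smul_comm lam]
      rw [e1, key2]
      rw [Matrix.add_mulVec, Matrix.smul_mulVec]
      rw [Matrix.mulVec_add, Matrix.mulVec_add, Matrix.mulVec_smul]
      have key1' : lam • x + ((η:ℂ) • (Cb' *ᵥ x) + (η:ℂ) • (A' *ᵥ y)) = 0 := by
        rw [key1]; abel
      have : A' *ᵥ (lam • x + ((η:ℂ) • (Cb' *ᵥ x) + (η:ℂ) • (A' *ᵥ y))) = 0 := by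
        rw [key1']; simp
      rw [Matrix.mulVec_add, Matrix.mulVec_add, Matrix.mulVec_smul, Matrix.mulVec_smul,
        Matrix.mulVec_smul] at this
      funext i
      have hti := congrFun this i
      simp only [Pi.add_apply, Pi.smul_apply, Pi.neg_apply, Pi.zero_apply,
        smul_eq_mul] at hti ⊢
      linear_combination hti
    -- scalar: dot with star x
    have hdot := congrArg (fun w => star x ⬝ᵥ w) hvec
    simp only [dotProduct_add, dotProduct_smul, dotProduct_zero,
      smul_eq_mul] at hdot
    rw [hmapt, hmapB]
    have hconj : A'ᵀᴴ = A' := by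
      ext i j
      simp [A', Matrix.conjTranspose_apply, Matrix.map_apply, Complex.conj_ofReal]
    have hstar : star (A'ᵀ *ᵥ x) ⬝ᵥ (A'ᵀ *ᵥ x) = star x ⬝ᵥ (A' *ᵥ (A'ᵀ *ᵥ x)) := by
      rw [Matrix.star_mulVec, hconj, ← Matrix.dotProduct_mulVec]
    rw [hstar]
    linear_combination hdot
end

section
/- Let A ∈ ℝ^{n×n} be positive definite in the sense that Re(z*Az) > 0 for all nonzero z ∈ ℂ^n, C positive semidefinite, η > 0, β > 0. Then every eigenvalue of G = [[−ηC_β, −ηA], [Aᵀ − C, −A]] has negative real part. -/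
open Matrix Complex


theorem my_eigen {m : Type*} [Fintype m] [DecidableEq m] (M : Matrix m m ℂ) (lam : ℂ)
    (h : lam ∈ spectrum ℂ M) : ∃ v ≠ 0, M *ᵥ v = lam • v := by
  have h1 := spectrum.mem_iff.mp h
  rw [Matrix.isUnit_iff_isUnit_det, isUnit_iff_ne_zero, not_not] at h1
  obtain ⟨v, hv, hmv⟩ := Matrix.exists_mulVec_eq_zero_iff.mpr h1
  refine ⟨v, hv, ?_⟩
  rw [Algebra.algebraMap_eq_smul_one, Matrix.sub_mulVec, Matrix.smul_mulVec,
    Matrix.one_mulVec, sub_eq_zero] at hmv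
  exact hmv.symm

theorem my_map_blocks {n : ℕ} (A C : Matrix (Fin n) (Fin n) ℝ) (η β : ℝ) :
    (Matrix.fromBlocks
        (-(η • (C + β • (1 : Matrix (Fin n) (Fin n) ℝ)))) (-(η • A))
        (Aᵀ - C) (-A)).map Complex.ofReal =
    Matrix.fromBlocks
        (-((η:ℂ) • (C.map Complex.ofReal + (β:ℂ) • 1))) (-((η:ℂ) • (A.map Complex.ofReal)))
        ((A.map Complex.ofReal)ᵀ - C.map Complex.ofReal) (-(A.map Complex.ofReal)) := by
  ext i j
  cases i <;> cases j <;>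
    simp [Matrix.map_apply, Matrix.one_apply, apply_ite Complex.ofReal]

theorem my_dot_self {m : Type*} [Fintype m] (g : m → ℂ) :
    star g ⬝ᵥ g = ((∑ i, Complex.normSq (g i) : ℝ) : ℂ) := by
  push_cast
  simp [dotProduct, Complex.normSq_eq_conj_mul_self]

theorem my_adjoint {m : Type*} [Fintype m] (M : Matrix m m ℝ) (x w : m → ℂ) :
    star x ⬝ᵥ ((M.map Complex.ofReal) *ᵥ w) = star ((M.map Complex.ofReal)ᵀ *ᵥ x) ⬝ᵥ w := by
  have h : ((M.map Complex.ofReal)ᵀ)ᴴ = M.map Complex.ofReal := by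
    ext i j
    simp [Matrix.conjTranspose_apply, Matrix.map_apply]
  rw [Matrix.dotProduct_mulVec, Matrix.star_mulVec, h]

theorem my_real_dot {m : Type*} [Fintype m] (M : Matrix m m ℝ) (a b : m → ℝ) :
    (fun i => (a i : ℂ)) ⬝ᵥ ((M.map Complex.ofReal) *ᵥ fun i => (b i : ℂ)) =
      ((a ⬝ᵥ M *ᵥ b : ℝ) : ℂ) := by
  simp [dotProduct, Matrix.mulVec, Matrix.map_apply]

theorem my_psd {m : Type*} [Fintype m] (C : Matrix m m ℝ) (hC : C.PosSemidef) (x : m → ℂ) :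
    ∃ t : ℝ, 0 ≤ t ∧ star x ⬝ᵥ ((C.map Complex.ofReal) *ᵥ x) = (t : ℂ) := by
  classical
  set u : m → ℝ := fun i => (x i).re with hu
  set w : m → ℝ := fun i => (x i).im with hw
  have hCsym : Cᵀ = C := by
    have := hC.1
    simpa [Matrix.IsHermitian, Matrix.conjTranspose_eq_transpose_of_trivial] using this
  have hsym : ∀ a b : m → ℝ, a ⬝ᵥ C *ᵥ b = b ⬝ᵥ C *ᵥ a := by
    intro a b
    rw [Matrix.dotProduct_mulVec, ← Matrix.mulVec_transpose, hCsym, dotProduct_comm]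
  have hx : x = (fun i => (u i : ℂ)) + Complex.I • (fun i => (w i : ℂ)) := by
    funext i
    simp [hu, hw, Pi.smul_apply]
    rw [mul_comm]
    exact (Complex.re_add_im (x i)).symm
  refine ⟨u ⬝ᵥ C *ᵥ u + w ⬝ᵥ C *ᵥ w, ?_, ?_⟩
  · have h1 := (Matrix.posSemidef_iff_dotProduct_mulVec.mp hC).2 u
    have h2 := (Matrix.posSemidef_iff_dotProduct_mulVec.mp hC).2 w
    simp only [star_trivial] at h1 h2
    exact add_nonneg h1 h2
  · rw [hx]
    simp only [star_add, star_smul, Matrix.mulVec_add, Matrix.mulVec_smul,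
      dotProduct_add, add_dotProduct, dotProduct_smul,
      smul_dotProduct, star_def]
    have hstar : ∀ a : m → ℝ, star (fun i => (a i : ℂ)) = fun i => (a i : ℂ) := by
      intro a; funext i; simp
    rw [hstar u, hstar w]
    rw [my_real_dot, my_real_dot, my_real_dot, my_real_dot]
    rw [hsym w u]
    simp [Complex.conj_I, smul_eq_mul]
    ring_nf
    rw [Complex.I_sq]
    ring

set_option maxHeartbeats 1000000 in
theorem my_quad_contra (η β Nr cr mr r s ar ai : ℝ) (hη : 0 < η) (hβ : 0 < β)
    (hNr0 : 0 < Nr) (hcr0 : 0 ≤ cr) (hmr0 : 0 ≤ mr) (hαre : 0 < ar) (hcon : 0 ≤ r)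
    (hE1 : (r*r - s*s)*Nr + η*r*cr + η*β*r*Nr + η*mr + (r*ar - s*ai) + η*β*ar = 0)
    (hE2 : 2*r*s*Nr + η*s*cr + η*β*s*Nr + (r*ai + s*ar) + η*β*ai = 0) : False := by
  have hΩ : 0 < η*cr + η*β*Nr + ar := by
    linarith [mul_nonneg (le_of_lt hη) hcr0, mul_pos (mul_pos hη hβ) hNr0, hαre]
  have hT : 0 < 2*r*Nr + (η*cr + η*β*Nr + ar) := by
    linarith [mul_nonneg hcon (le_of_lt hNr0)]
  have hkey : (r*r*Nr + r*(η*cr + η*β*Nr + ar) + η*mr + η*β*ar)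
        * (2*r*Nr + (η*cr + η*β*Nr + ar))^2
      + ai^2*(r+η*β)*(r*Nr+η*cr+ar) = 0 := by
    linear_combination (2*r*Nr + (η*cr + η*β*Nr + ar))^2 * hE1
      + (Nr*s*(2*r*Nr + (η*cr + η*β*Nr + ar)) - Nr*ai*(r+η*β)
          + ai*(2*r*Nr + (η*cr + η*β*Nr + ar))) * hE2
  have h5 : 0 < r*r*Nr + r*(η*cr + η*β*Nr + ar) + η*mr + η*β*ar := by
    linarith [mul_nonneg (mul_nonneg hcon hcon) (le_of_lt hNr0), mul_nonneg hcon (le_of_lt hΩ),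
      mul_nonneg (le_of_lt hη) hmr0, mul_pos (mul_pos hη hβ) hαre]
  have h6 : 0 < (2*r*Nr + (η*cr + η*β*Nr + ar))^2 := pow_pos hT 2
  have h7 : 0 ≤ ai^2*(r+η*β)*(r*Nr+η*cr+ar) := by
    have ha : (0:ℝ) ≤ ai^2 := sq_nonneg ai
    have hb : 0 < r+η*β := by linarith [mul_pos hη hβ]
    have hcpos : 0 < r*Nr+η*cr+ar := by
      linarith [mul_nonneg hcon (le_of_lt hNr0), mul_nonneg (le_of_lt hη) hcr0]
    positivity
  nlinarith [mul_pos h5 h6, h7, hkey]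


/-- If `A` is positive definite in the sense `Re(z*Az) > 0` for all nonzero
`z ∈ ℂⁿ`, `C` is positive semidefinite and `η, β > 0`, then every eigenvalue of the TDRC
matrix `G = [[−ηC_β, −ηA], [Aᵀ − C, −A]]` has negative real part. -/
theorem tdrc_stable_when_A_posdef {n : ℕ} (A C : Matrix (Fin n) (Fin n) ℝ)
    (hA : ∀ z : Fin n → ℂ, z ≠ 0 →
      0 < ((star z) ⬝ᵥ ((A.map Complex.ofReal).mulVec z)).re)
    (hC : C.PosSemidef) (η β : ℝ) (hη : 0 < η) (hβ : 0 < β) :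
    ∀ lam ∈ spectrum ℂ ((Matrix.fromBlocks
        (-(η • (C + β • (1 : Matrix (Fin n) (Fin n) ℝ)))) (-(η • A))
        (Aᵀ - C) (-A)).map Complex.ofReal), lam.re < 0 := by
  intro lam hlam
  obtain ⟨v, hv, hMv⟩ := my_eigen _ lam hlam
  rw [my_map_blocks] at hMv
  set A' : Matrix (Fin n) (Fin n) ℂ := A.map Complex.ofReal with hA'def
  set C' : Matrix (Fin n) (Fin n) ℂ := C.map Complex.ofReal with hC'def
  set x : Fin n → ℂ := v ∘ Sum.inl with hxdef
  set y : Fin n → ℂ := v ∘ Sum.inr with hydef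
  have hvel : v = Sum.elim x y := (Sum.elim_comp_inl_inr v).symm
  rw [hvel, Matrix.fromBlocks_mulVec] at hMv
  simp only [Sum.elim_comp_inl, Sum.elim_comp_inr] at hMv
  -- entrywise equations
  have h1e : ∀ i, -((η:ℂ) * ((C' *ᵥ x) i)) - (η:ℂ)*(β:ℂ)*(x i) - (η:ℂ) * ((A' *ᵥ y) i)
      = lam * x i := by
    intro i
    have h := congrFun hMv (Sum.inl i)
    simp only [Sum.elim_inl, Pi.smul_apply, smul_eq_mul, Matrix.add_mulVec,
      Matrix.neg_mulVec, Matrix.sub_mulVec, Matrix.smul_mulVec, Matrix.one_mulVec,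
      Pi.neg_apply, Pi.add_apply, Pi.sub_apply] at h
    linear_combination h
  have h2e : ∀ i, (A'ᵀ *ᵥ x) i - (C' *ᵥ x) i - (A' *ᵥ y) i = lam * y i := by
    intro i
    have h := congrFun hMv (Sum.inr i)
    simp only [Sum.elim_inr, Pi.smul_apply, smul_eq_mul, Matrix.add_mulVec,
      Matrix.neg_mulVec, Matrix.sub_mulVec, Matrix.smul_mulVec, Matrix.one_mulVec,
      Pi.neg_apply, Pi.add_apply, Pi.sub_apply] at h
    linear_combination h
  -- x ≠ 0
  have hx0 : x ≠ 0 := by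
    intro hx
    have hy0 : y ≠ 0 := by
      intro hy
      apply hv
      rw [hvel, hx, hy]
      funext i
      cases i <;> rfl
    have hAy : A' *ᵥ y = 0 := by
      funext i
      have h := h1e i
      rw [hx] at h
      simp only [Pi.zero_apply, mul_zero, Matrix.mulVec_zero] at h
      have hηne : (η:ℂ) ≠ 0 := by
        simpa using ne_of_gt hη
      have h2 : (η:ℂ) * (A' *ᵥ y) i = 0 := by linear_combination -h
      rcases mul_eq_zero.mp h2 with h' | h'
      · exact absurd h' hηne
      · simpa using h'
    have := hA y hy0
    rw [show (A.map Complex.ofReal).mulVec y = A' *ᵥ y from rfl, hAy] at this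
    simp at this
  -- vector equations
  have h1v : -((η:ℂ) • (C' *ᵥ x)) - ((η:ℂ)*(β:ℂ)) • x - (η:ℂ) • (A' *ᵥ y) = lam • x := by
    funext i
    simp only [Pi.sub_apply, Pi.neg_apply, Pi.smul_apply, smul_eq_mul]
    linear_combination h1e i
  have h3v : ((η:ℂ)*lam) • y = (η:ℂ) • (A'ᵀ *ᵥ x) + (lam + (η:ℂ)*(β:ℂ)) • x := by
    funext i
    simp only [Pi.add_apply, Pi.smul_apply, smul_eq_mul]
    linear_combination h1e i - (η:ℂ) * h2e i
  have h4v : ((η:ℂ)*lam) • (A' *ᵥ y)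
      = (η:ℂ) • (A' *ᵥ (A'ᵀ *ᵥ x)) + (lam + (η:ℂ)*(β:ℂ)) • (A' *ᵥ x) := by
    have := congrArg (fun z => A' *ᵥ z) h3v
    simpa only [Matrix.mulVec_smul, Matrix.mulVec_add] using this
  -- scalars
  set N : ℂ := star x ⬝ᵥ x with hNdef
  set c : ℂ := star x ⬝ᵥ (C' *ᵥ x) with hcdef
  set α : ℂ := star x ⬝ᵥ (A' *ᵥ x) with hαdef
  set μ : ℂ := star x ⬝ᵥ (A' *ᵥ (A'ᵀ *ᵥ x)) with hμdef
  set p : ℂ := star x ⬝ᵥ (A' *ᵥ y) with hpdef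
  have hd1 : -((η:ℂ) * c) - ((η:ℂ)*(β:ℂ)) * N - (η:ℂ) * p = lam * N := by
    have := congrArg (fun z => star x ⬝ᵥ z) h1v
    simpa only [dotProduct_sub, dotProduct_neg, dotProduct_smul,
      smul_eq_mul] using this
  have hd4 : ((η:ℂ)*lam) * p = (η:ℂ) * μ + (lam + (η:ℂ)*(β:ℂ)) * α := by
    have := congrArg (fun z => star x ⬝ᵥ z) h4v
    simpa only [dotProduct_add, dotProduct_smul, smul_eq_mul] using this
  have hfin : lam*lam*N + (η:ℂ)*lam*c + (η:ℂ)*(β:ℂ)*lam*N + (η:ℂ)*μ + lam*α + (η:ℂ)*(β:ℂ)*α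
      = 0 := by
    linear_combination -lam * hd1 - hd4
  -- real data
  obtain ⟨cr, hcr0, hcval⟩ := my_psd C hC x
  have hNval : N = ((∑ i, Complex.normSq (x i) : ℝ) : ℂ) := my_dot_self x
  set Nr : ℝ := ∑ i, Complex.normSq (x i) with hNrdef
  have hNr0 : 0 < Nr := by
    have h1 : ∃ i, x i ≠ 0 := by
      by_contra h
      push_neg at h
      exact hx0 (funext h)
    obtain ⟨i, hi⟩ := h1
    apply Finset.sum_pos' (fun j _ => Complex.normSq_nonneg _)
    exact ⟨i, Finset.mem_univ i, Complex.normSq_pos.mpr hi⟩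
  have hμval : μ = ((∑ i, Complex.normSq ((A'ᵀ *ᵥ x) i) : ℝ) : ℂ) := by
    rw [hμdef, hA'def, my_adjoint, my_dot_self]
  set mr : ℝ := ∑ i, Complex.normSq ((A'ᵀ *ᵥ x) i) with hmrdef
  have hmr0 : 0 ≤ mr := Finset.sum_nonneg fun i _ => Complex.normSq_nonneg _
  have hαre : 0 < α.re := hA x hx0
  set r : ℝ := lam.re with hrdef
  set s : ℝ := lam.im with hsdef
  set ar : ℝ := α.re with hardef
  set ai : ℝ := α.im with haidef
  -- extract real and imaginary parts
  have hcval' : c = (cr : ℂ) := by rw [hcdef, hC'def]; exact hcval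
  rw [hNval, hcval', hμval] at hfin
  rw [Complex.ext_iff] at hfin
  obtain ⟨hre, him⟩ := hfin
  simp only [Complex.add_re, Complex.add_im, Complex.mul_re, Complex.mul_im,
    Complex.ofReal_re, Complex.ofReal_im, Complex.zero_re, Complex.zero_im] at hre him
  rw [← hrdef, ← hsdef, ← hardef, ← haidef] at hre him
  have hE1 : (r*r - s*s)*Nr + η*r*cr + η*β*r*Nr + η*mr + (r*ar - s*ai) + η*β*ar = 0 := by
    linear_combination hre
  have hE2 : 2*r*s*Nr + η*s*cr + η*β*s*Nr + (r*ai + s*ar) + η*β*ai = 0 := by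
    linear_combination him
  -- final contradiction
  by_contra hcon
  push_neg at hcon
  exact my_quad_contra η β Nr cr mr r s ar ai hη hβ hNr0 hcr0 hmr0 hαre hcon hE1 hE2
end

section
/- Let A ∈ ℝ^{n×n}, and suppose λ_r = Re(z*Az)/‖z‖² satisfies λ_r < 0 for some z. Fix such z, set b_a = ‖Aᵀz‖²/‖z‖² > 0, λ_c = Im(z*Az)/‖z‖². If β > 0 satisfies βλ_r + b_a > 0 and η satisfies η > (1/β)(√(−βλ_c²λ_r/(βλ_r + b_a)) − λ_r), then ηβ + λ_r > 0 and (ηβ + λ_r)²(βλ_r + b_a) + βλ_c²λ_r > 0. -/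
open Matrix Complex

theorem lt_sq_mul_of_sqrt_div_lt {c d x : ℝ} (hd : 0 < d) (h : √(c / d) < x) :
    c < x ^ 2 * d :=
  (div_lt_iff₀ hd).1 <| (Real.sqrt_lt' <| (Real.sqrt_nonneg _).trans_lt h).1 h

theorem tdrc_singular_C_conditions_general (lr lc b_a η β : ℝ)
    (hβ : 0 < β)
    (hcond : 0 < β * lr + b_a)
    (hη : (1 / β) * (Real.sqrt (-(β * lc ^ 2 * lr) / (β * lr + b_a)) - lr) < η) :
    0 < η * β + lr ∧
    0 < (η * β + lr) ^ 2 * (β * lr + b_a) + β * lc ^ 2 * lr := by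
  have hsqrt : √(-(β * lc ^ 2 * lr) / (β * lr + b_a)) < η * β + lr := by
    rw [one_div_mul_eq_div, div_lt_iff₀ hβ] at hη
    linarith
  refine ⟨(Real.sqrt_nonneg _).trans_lt hsqrt, ?_⟩
  linarith [lt_sq_mul_of_sqrt_div_lt hcond hsqrt]

/-- singular-C case conditions: with `λ_r = Re(z*Az)/‖z‖² < 0`,
`λ_c = Im(z*Az)/‖z‖²`, `b_a = ‖Aᵀz‖²/‖z‖² > 0`, `β > 0` with `βλ_r + b_a > 0`, and
`η > (1/β)(√(−βλ_c²λ_r/(βλ_r + b_a)) − λ_r)`, we get `ηβ + λ_r > 0` and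
`(ηβ + λ_r)²(βλ_r + b_a) + βλ_c²λ_r > 0`. -/
theorem tdrc_singular_C_conditions {n : ℕ} (A : Matrix (Fin n) (Fin n) ℝ)
    (z : Fin n → ℂ) (hz : z ≠ 0) (lr lc b_a η β : ℝ)
    (hlr : lr = (((star z) ⬝ᵥ ((A.map Complex.ofReal).mulVec z)) / (star z ⬝ᵥ z)).re)
    (hlc : lc = (((star z) ⬝ᵥ ((A.map Complex.ofReal).mulVec z)) / (star z ⬝ᵥ z)).im)
    (hba : b_a = (((star ((Aᵀ.map Complex.ofReal).mulVec z)) ⬝ᵥ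
        ((Aᵀ.map Complex.ofReal).mulVec z)) / (star z ⬝ᵥ z)).re)
    (hlr_neg : lr < 0) (hba_pos : 0 < b_a) (hβ : 0 < β)
    (hcond : 0 < β * lr + b_a)
    (hη : (1 / β) * (Real.sqrt (-(β * lc ^ 2 * lr) / (β * lr + b_a)) - lr) < η) :
    0 < η * β + lr ∧
    0 < (η * β + lr) ^ 2 * (β * lr + b_a) + β * lc ^ 2 * lr :=
  tdrc_singular_C_conditions_general lr lc b_a η β hβ hcond hη
end
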